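/- In the generalized loop Witt algebra L acting on V = L⊗L ≅ (W⊗W)[x^{±1}, y^{±1}], the element r = (L_0 ⊗ L_0) f₀(x,y) satisfies L_{α,0}·r ∈ Im(1⊗1−τ) for all α ∈ Γ if and only if f₀(x,y) + f₀(y,x) = 0, in which case r ∈ Im(1⊗1−τ). -/

import Mathlib

open Finsupp TensorProduct

/-- Bracket of the generalized loop Witt algebra `[L_{α,i},L_{β,j}] = (β−α)L_{α+β,i+j}`. -/
noncomputable def bk2 {F : Type*} [Field F] (Γ : AddSubgroup F) :
    ((Γ × ℤ) →₀ F) →ₗ[F] ((Γ × ℤ) →₀ F) →ₗ[F] ((Γ × ℤ) →₀ F) :=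
  Finsupp.lsum F fun p => LinearMap.toSpanSingleton F _
    (Finsupp.lsum F fun q =>
      (((q.1 : F) - (p.1 : F)) • Finsupp.lsingle (p.1 + q.1, p.2 + q.2) : F →ₗ[F] _))

/-- Diagonal adjoint action of `L` on `L ⊗ L`. -/
noncomputable def act {F : Type*} [Field F] (Γ : AddSubgroup F) (x : (Γ × ℤ) →₀ F) :
    (((Γ × ℤ) →₀ F) ⊗[F] ((Γ × ℤ) →₀ F)) →ₗ[F] (((Γ × ℤ) →₀ F) ⊗[F] ((Γ × ℤ) →₀ F)) :=
  LinearMap.rTensor _ (bk2 Γ x) + LinearMap.lTensor _ (bk2 Γ x)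

/-- The twist map `τ(L_α xⁱyʲ ⊗ L_β) = ...`, i.e. `τ(u ⊗ v) = v ⊗ u`. -/
noncomputable def tw {F : Type*} [Field F] (Γ : AddSubgroup F) :
    (((Γ × ℤ) →₀ F) ⊗[F] ((Γ × ℤ) →₀ F)) →ₗ[F] (((Γ × ℤ) →₀ F) ⊗[F] ((Γ × ℤ) →₀ F)) :=
  (TensorProduct.comm F _ _).toLinearMap

/-- The element `r = (L_0 ⊗ L_0) f₀(x,y) = Σ_{i,j} f₀(i,j) · L_{0,i} ⊗ L_{0,j}`,
where `f₀ ∈ F[x^{±1},y^{±1}]` is encoded by its (finitely many) coefficients. -/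
noncomputable def rOf {F : Type*} [Field F] (Γ : AddSubgroup F) (f : (ℤ × ℤ) →₀ F) :
    ((Γ × ℤ) →₀ F) ⊗[F] ((Γ × ℤ) →₀ F) :=
  f.sum fun p c => c •
    ((Finsupp.single ((0 : Γ), p.1) (1 : F)) ⊗ₜ[F] (Finsupp.single ((0 : Γ), p.2) (1 : F)))

/-! Write `(L_a ⊗ L_b) g` for `Σ g(i,j) L_{a,i} ⊗ L_{b,j}`. Then
`L_{α,0}·(L_a ⊗ L_b) g = (a-α)(L_{α+a} ⊗ L_b) g + (b-α)(L_a ⊗ L_{α+b}) g`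
and `τ((L_a ⊗ L_b) g(x,y)) = (L_b ⊗ L_a) g(y,x)`. Since `τ` is an involution and `2` is
invertible, `v ∈ Im(1 - τ)` iff `v + τ v = 0`. With `g = f₀(x,y) + f₀(y,x)` this turns the two
conditions into `(L_0 ⊗ L_0) g = 0` and `-α((L_α ⊗ L_0) g + (L_0 ⊗ L_α) g) = 0`; for `α ≠ 0`
the two summands lie in different weight spaces, so either condition holds iff `g = 0`. -/

theorem mem_range_sub_iff_add_eq_zero {R M : Type*} [Ring R] [Invertible (2 : R)]
    [AddCommGroup M] [Module R M] {τ : M →ₗ[R] M} (hτ : Function.Involutive τ) (v : M) :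
    v ∈ Set.range (fun u => u - τ u) ↔ v + τ v = 0 := by
  constructor
  · rintro ⟨u, rfl⟩
    rw [map_sub, hτ u, sub_add_sub_cancel, sub_self]
  · intro h
    have hτv : τ v = -v := eq_neg_of_add_eq_zero_right h
    refine ⟨⅟(2 : R) • v, ?_⟩
    change ⅟(2 : R) • v - τ (⅟(2 : R) • v) = v
    rw [map_smul, hτv, smul_neg, sub_neg_eq_add, ← add_smul, invOf_two_add_invOf_two, one_smul]

section LoopTensor

variable {F : Type*} [Field F] (Γ : AddSubgroup F)

lemma mem_range_sub_tw_iff [CharZero F] (v : ((Γ × ℤ) →₀ F) ⊗[F] ((Γ × ℤ) →₀ F)) :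
    v ∈ Set.range (fun u => u - tw Γ u) ↔ v + tw Γ v = 0 :=
  letI : Invertible (2 : F) := invertibleOfNonzero two_ne_zero
  mem_range_sub_iff_add_eq_zero (fun _ => TensorProduct.comm_comm _ _ _ _) v

lemma bk2_single_single (p q : Γ × ℤ) :
    bk2 Γ (single p 1) (single q 1) = ((q.1 : F) - p.1) • single (p + q) 1 := by
  simp [bk2, Prod.add_def]

/-- The element `(L_a ⊗ L_b) g(x,y)` of the paper. -/
noncomputable def loopTensor (a b : Γ) :
    ((ℤ × ℤ) →₀ F) →ₗ[F] ((Γ × ℤ) →₀ F) ⊗[F] ((Γ × ℤ) →₀ F) :=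
  Finsupp.lsum F fun p => LinearMap.toSpanSingleton F _ (single (a, p.1) 1 ⊗ₜ single (b, p.2) 1)

lemma rOf_eq_loopTensor (f : (ℤ × ℤ) →₀ F) : rOf Γ f = loopTensor Γ 0 0 f := rfl

lemma loopTensor_single (a b : Γ) (p : ℤ × ℤ) (c : F) :
    loopTensor Γ a b (single p c) = c • (single (a, p.1) 1 ⊗ₜ single (b, p.2) 1) := by
  simp only [loopTensor, lsum_single, LinearMap.toSpanSingleton_apply]

lemma tw_loopTensor (a b : Γ) (f : (ℤ × ℤ) →₀ F) :
    tw Γ (loopTensor Γ a b f) =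
      loopTensor Γ b a (Finsupp.domCongr (Equiv.prodComm ℤ ℤ) f) := by
  induction f using Finsupp.induction_linear with
  | zero => simp
  | add f g hf hg => simp only [map_add, hf, hg]
  | single p c => simp [loopTensor_single, tw]

lemma act_single_loopTensor (α a b : Γ) (f : (ℤ × ℤ) →₀ F) :
    act Γ (single (α, 0) 1) (loopTensor Γ a b f) =
      ((a : F) - α) • loopTensor Γ (α + a) b f +
        ((b : F) - α) • loopTensor Γ a (α + b) f := by
  induction f using Finsupp.induction_linear with
  | zero => simp
  | add f g hf hg => simp only [map_add, hf, hg, smul_add]; abel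
  | single p c =>
    simp only [loopTensor_single, map_smul, act, LinearMap.add_apply, LinearMap.rTensor_tmul,
      LinearMap.lTensor_tmul, bk2_single_single, Prod.mk_add_mk, zero_add, ← smul_tmul',
      tmul_smul]
    module

lemma finsuppTensorFinsupp'_loopTensor (a b : Γ) (f : (ℤ × ℤ) →₀ F) :
    finsuppTensorFinsupp' F _ _ (loopTensor Γ a b f) =
      f.mapDomain fun p => ((a, p.1), (b, p.2)) := by
  induction f using Finsupp.induction_linear with
  | zero => simp
  | add f g hf hg => simp only [map_add, hf, hg, mapDomain_add]
  | single p c =>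
    simp [loopTensor_single, finsuppTensorFinsupp'_single_tmul_single, mapDomain_single]

lemma eq_zero_of_loopTensor_add_loopTensor_eq_zero {a a' b b' : Γ} (ha : a ≠ a')
    {f g : (ℤ × ℤ) →₀ F} (h : loopTensor Γ a b f + loopTensor Γ a' b' g = 0) :
    f = 0 := by
  ext ⟨i, j⟩
  have hcoeff := congr(finsuppTensorFinsupp' F _ _ $h ((a, i), (b, j)))
  have hinj : Function.Injective fun p : ℤ × ℤ => ((a, p.1), (b, p.2)) := by
    intro p q hpq
    simp_all [Prod.ext_iff]
  rw [map_add, finsuppTensorFinsupp'_loopTensor, finsuppTensorFinsupp'_loopTensor,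
    Finsupp.add_apply, mapDomain_apply hinj f (i, j),
    mapDomain_of_notMem_range _ _ (by simp [ha.symm])] at hcoeff
  simpa using hcoeff

lemma rOf_add_tw (f : (ℤ × ℤ) →₀ F) :
    rOf Γ f + tw Γ (rOf Γ f) =
      loopTensor Γ 0 0 (f + Finsupp.domCongr (Equiv.prodComm ℤ ℤ) f) := by
  rw [rOf_eq_loopTensor, tw_loopTensor, map_add]

lemma act_rOf_add_tw (α : Γ) (f : (ℤ × ℤ) →₀ F) :
    act Γ (single (α, 0) 1) (rOf Γ f) + tw Γ (act Γ (single (α, 0) 1) (rOf Γ f)) =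
      (-(α : F)) • (loopTensor Γ α 0 (f + Finsupp.domCongr (Equiv.prodComm ℤ ℤ) f) +
        loopTensor Γ 0 α (f + Finsupp.domCongr (Equiv.prodComm ℤ ℤ) f)) := by
  simp only [rOf_eq_loopTensor, act_single_loopTensor, map_add, map_smul, tw_loopTensor,
    add_zero, AddSubgroup.coe_zero, zero_sub]
  module

end LoopTensor

theorem L0_tensor_L0_antisymmetry
    {F : Type*} [Field F] [CharZero F] (Γ : AddSubgroup F)
    (hne : ∃ α : Γ, α ≠ 0) (f : (ℤ × ℤ) →₀ F) :
    ((∀ α : Γ, act Γ (Finsupp.single ((α, 0) : Γ × ℤ) (1 : F)) (rOf Γ f) ∈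
        Set.range fun u => u - tw Γ u) ↔ (∀ i j : ℤ, f (i, j) + f (j, i) = 0)) ∧
    ((∀ i j : ℤ, f (i, j) + f (j, i) = 0) → ∃ u, rOf Γ f = u - tw Γ u) := by
  have hsymm : (∀ i j : ℤ, f (i, j) + f (j, i) = 0) ↔
      f + Finsupp.domCongr (Equiv.prodComm ℤ ℤ) f = 0 := by
    simp [Finsupp.ext_iff]
  simp only [mem_range_sub_tw_iff, act_rOf_add_tw, hsymm]
  refine ⟨⟨fun h => ?_, fun h α => by rw [h, map_zero, map_zero, add_zero, smul_zero]⟩,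
    fun h => ?_⟩
  · obtain ⟨α, hα⟩ := hne
    have hα' : -(α : F) ≠ 0 := by simpa using hα
    exact eq_zero_of_loopTensor_add_loopTensor_eq_zero Γ hα
      ((smul_eq_zero.mp (h α)).resolve_left hα')
  · exact ((mem_range_sub_tw_iff Γ _).mpr (by rw [rOf_add_tw, h, map_zero])).imp
      fun _ hu => hu.symm
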